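/- arXiv:1108.1661 — 6 statements merged into one kernel-verified Lean document; each statement's English description precedes it below -/
import Mathlib

section
/- Under the standing hypotheses, the center of S (regarded as a subgroup of G) equals Z, the normalizer N_G(S) is contained in M, and S is a Sylow 3-subgroup of G. -/
/-!
The normal `3`-subgroup `Q` of `M` lies in `S`, so `Z(S) ≤ C_M(Q) ∩ C(Q) ≤ Z(Q) = Z`; conversely
the `3`-group `S` normalizes `Z` of order `3` and `Aut Z` has order `2`, so `S` centralizes `Z`.
Hence `Z = Z(S)` is characteristic in `S` and `N_G(S) ≤ N_G(Z) = M`. Finally, counting fixed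
points of `S` on `G ⧸ S` gives `[G : S] ≡ [N_G(S) : S] (mod 3)`, and `[N_G(S) : S]` divides
`[M : S]`, which is prime to `3`; so `S` is Sylow in `G`.
-/

open Subgroup

namespace Subgroup

variable {G : Type*} [Group G]

theorem map_subtype_center (H : Subgroup G) :
    (center H).map H.subtype = H ⊓ centralizer (H : Set G) := by
  ext x
  simp only [mem_map, mem_inf, mem_centralizer_iff, mem_center_iff]
  constructor
  · rintro ⟨y, hy, rfl⟩
    exact ⟨y.2, fun h hh => congrArg Subtype.val (hy ⟨h, hh⟩)⟩
  · rintro ⟨hx, hc⟩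
    exact ⟨⟨x, hx⟩, fun h => Subtype.ext (hc h h.2), rfl⟩

theorem normalizer_le_normalizer_centralizer (H : Subgroup G) :
    normalizer (H : Set G) ≤ normalizer (centralizer (H : Set G) : Set G) := by
  intro g hg
  rw [mem_normalizer_iff]
  intro x
  simp only [mem_centralizer_iff]
  constructor
  · intro hx h hh
    have key := hx (g⁻¹ * h * g) ((mem_normalizer_iff''.mp hg h).mp hh)
    calc h * (g * x * g⁻¹) = g * ((g⁻¹ * h * g) * x) * g⁻¹ := by group
      _ = g * (x * (g⁻¹ * h * g)) * g⁻¹ := by rw [key]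
      _ = g * x * g⁻¹ * h := by group
  · intro hx h hh
    have key := hx (g * h * g⁻¹) ((mem_normalizer_iff.mp hg h).mp hh)
    calc h * x = g⁻¹ * ((g * h * g⁻¹) * (g * x * g⁻¹)) * g := by group
      _ = g⁻¹ * ((g * x * g⁻¹) * (g * h * g⁻¹)) * g := by rw [key]
      _ = x * h := by group

end Subgroup

namespace IsPGroup

variable {G : Type*} [Group G] {p : ℕ}

theorem le_map_subtype_sylow {Q H : Subgroup G} (hQ : IsPGroup p Q) (hQH : Q ≤ H)
    (hHQ : ∀ h ∈ H, ∀ q ∈ Q, h * q * h⁻¹ ∈ Q) (S : Sylow p H) :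
    Q ≤ (S : Subgroup H).map H.subtype := by
  have : (Q.comap H.subtype).Normal := ⟨fun q hq h => hHQ h h.2 q hq⟩
  have hQS := (hQ.comap_subtype (K := H)).le_sylow_of_normal S
  simpa [subgroupOf_map_subtype, inf_eq_left.mpr hQH] using map_mono (f := H.subtype) hQS

variable [Fact p.Prime]

theorem le_centralizer_of_le_normalizer {P Z : Subgroup G} (hP : IsPGroup p P)
    (hZ : Nat.card Z = p) (hPZ : P ≤ normalizer (Z : Set G)) :
    P ≤ centralizer (Z : Set G) := by
  intro g hg
  have : IsCyclic Z := isCyclic_of_prime_card hZ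
  have : Finite Z := Nat.finite_of_card_ne_zero (hZ ▸ (Fact.out : p.Prime).ne_zero)
  obtain ⟨k, hk⟩ := hP ⟨g, hg⟩
  replace hk : g ^ p ^ k = 1 := by simpa using congrArg Subtype.val hk
  set φ := Z.normalizerMonoidHom ⟨g, hPZ hg⟩
  have hφ : φ ^ p ^ k = 1 := by
    rw [← map_pow, ← map_one Z.normalizerMonoidHom]
    congr 1
    exact Subtype.ext (by simpa using hk)
  have hcard : Nat.card (MulAut Z) = p - 1 := by
    rw [IsCyclic.card_mulAut, hZ, Nat.totient_prime Fact.out]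
  have hcop : (p ^ k).Coprime (p - 1) :=
    ((Nat.coprime_self_sub_right (Fact.out : p.Prime).one_le).mpr p.coprime_one_right).pow_left k
  have : φ = 1 := orderOf_eq_one_iff.mp <|
    Nat.eq_one_of_dvd_coprimes hcop (orderOf_dvd_of_pow_eq_one hφ) (hcard ▸ orderOf_dvd_natCard φ)
  have hker : (⟨g, hPZ hg⟩ : normalizer (Z : Set G)) ∈ Z.normalizerMonoidHom.ker := this
  rwa [normalizerMonoidHom_ker, mem_subgroupOf] at hker

variable [Finite G]

/-- `H` acts on `G ⧸ H` with fixed points `N(H) ⧸ H`. -/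
theorem dvd_index_iff_dvd_relIndex_normalizer {H : Subgroup G} (hH : IsPGroup p H) :
    p ∣ H.index ↔ p ∣ H.relIndex (normalizer (H : Set G)) := by
  obtain ⟨n, hn⟩ := hH.exists_card_eq
  exact ((Sylow.card_quotient_normalizer_modEq_card_quotient hn).dvd_iff (dvd_refl p)).symm

end IsPGroup

theorem Sylow.exists_eq_map_subtype_of_normalizer_le {G : Type*} [Group G] [Finite G] {p : ℕ}
    [Fact p.Prime] {H : Subgroup G} (S : Sylow p H)
    (hN : normalizer ((S : Subgroup H).map H.subtype : Set G) ≤ H) :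
    ∃ T : Sylow p G, (T : Subgroup G) = (S : Subgroup H).map H.subtype := by
  set P := (S : Subgroup H).map H.subtype
  have hP : IsPGroup p P := S.isPGroup'.map _
  refine ⟨hP.toSylow fun h => S.not_dvd_index ?_, rfl⟩
  have hPH : P.relIndex H = (S : Subgroup H).index := by
    rw [relIndex, subgroupOf, comap_map_eq_self_of_injective H.subtype_injective]
  rw [← hPH, ← relIndex_mul_relIndex P _ H le_normalizer hN]
  exact ((hP.dvd_index_iff_dvd_relIndex_normalizer).mp h).mul_right _

theorem stmt0_general {G : Type*} [Group G] [Finite G]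
    (Z Q : Subgroup G)
    (hZcard : Nat.card Z = 3)
    (hQcent : Q ≤ Subgroup.centralizer (Z : Set G))
    (hQnormM : ∀ m ∈ (Subgroup.normalizer (Z : Set G)), ∀ q ∈ Q, m * q * m⁻¹ ∈ Q)
    (hQcard : Nat.card Q = 3 ^ 5)
    (hQcenter : Q ⊓ Subgroup.centralizer (Q : Set G) = Z)
    (hCMQ : (Subgroup.normalizer (Z : Set G)) ⊓ Subgroup.centralizer (Q : Set G) ≤ Q)
    (S : Sylow 3 (Subgroup.normalizer (Z : Set G))) :
    Subgroup.map (Subgroup.map (Subgroup.normalizer (Z : Set G)).subtype S.toSubgroup).subtype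
        (Subgroup.center (Subgroup.map (Subgroup.normalizer (Z : Set G)).subtype S.toSubgroup)) = Z ∧
    Subgroup.normalizer ((Subgroup.map (Subgroup.normalizer (Z : Set G)).subtype S.toSubgroup : Subgroup G) : Set G) ≤ (Subgroup.normalizer (Z : Set G)) ∧
    ∃ T : Sylow 3 G, (T : Subgroup G) = Subgroup.map (Subgroup.normalizer (Z : Set G)).subtype S.toSubgroup := by
  have : Fact (Nat.Prime 3) := ⟨Nat.prime_three⟩
  set P := (S : Subgroup _).map (normalizer (Z : Set G)).subtype
  have hPM : P ≤ normalizer (Z : Set G) := map_subtype_le _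
  have hQP : Q ≤ P :=
    (IsPGroup.of_card hQcard).le_map_subtype_sylow (hQcent.trans (centralizer_le_normalizer _))
      hQnormM S
  have hZQ : Z ≤ Q := hQcenter ▸ inf_le_left
  have hPZ : P ≤ centralizer (Z : Set G) :=
    (S.isPGroup'.map _).le_centralizer_of_le_normalizer hZcard hPM
  have hcenter : P ⊓ centralizer (P : Set G) = Z := by
    refine le_antisymm ?_ (le_inf (hZQ.trans hQP) (le_centralizer_iff.mp hPZ))
    have hCPQ : centralizer (P : Set G) ≤ centralizer (Q : Set G) := centralizer_le hQP
    rw [← hQcenter]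
    exact le_inf (le_trans (inf_le_inf hPM hCPQ) hCMQ) (inf_le_right.trans hCPQ)
  have hNP : normalizer (P : Set G) ≤ normalizer (Z : Set G) := by
    rw [← hcenter]
    exact (le_inf le_rfl P.normalizer_le_normalizer_centralizer).trans
      inf_normalizer_le_normalizer_inf
  exact ⟨by rw [map_subtype_center, hcenter], hNP, S.exists_eq_map_subtype_of_normalizer_le hNP⟩

/-- Under the standing hypotheses of the main theorem
(`G` finite, `Z ≤ G` of order 3, `M = N_G(Z)`, `Q` an extraspecial normal
subgroup of `M` of order `3^5` with `Z(Q) = Z`, `C_M(Q) ≤ Q`, `Z(C_G(Z)) = Z`,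
`R*/Q ≅ Q₈ × Q₈` for a normal subgroup `R*` of `C_G(Z)`, and `Z` not weakly
closed in `Q`), if `S` is a Sylow 3-subgroup of `M`, then the center of `S`
(as a subgroup of `G`) equals `Z`, `N_G(S) ≤ M`, and `S` is a Sylow
3-subgroup of `G`. -/
theorem stmt0 {G : Type*} [Group G] [Finite G]
    (Z Q Rstar : Subgroup G)
    (hZcard : Nat.card Z = 3)
    (hQcent : Q ≤ Subgroup.centralizer (Z : Set G))
    (hQnormM : ∀ m ∈ (Subgroup.normalizer (Z : Set G)), ∀ q ∈ Q, m * q * m⁻¹ ∈ Q)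
    (hQcard : Nat.card Q = 3 ^ 5)
    (hQcenter : Q ⊓ Subgroup.centralizer (Q : Set G) = Z)
    (hQcommutator : ⁅Q, Q⁆ = Z)
    (hQcube : ∀ q ∈ Q, q ^ 3 ∈ Z)
    (hCMQ : (Subgroup.normalizer (Z : Set G)) ⊓ Subgroup.centralizer (Q : Set G) ≤ Q)
    (hZC : Subgroup.centralizer (Z : Set G) ⊓
      Subgroup.centralizer ((Subgroup.centralizer (Z : Set G) : Subgroup G) : Set G) = Z)
    (hQR : Q ≤ Rstar)
    (hRC : Rstar ≤ Subgroup.centralizer (Z : Set G))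
    (hRnorm : ∀ c ∈ Subgroup.centralizer (Z : Set G), ∀ r ∈ Rstar, c * r * c⁻¹ ∈ Rstar)
    [hQRn : (Q.subgroupOf Rstar).Normal]
    (hRQiso : Nonempty ((Rstar ⧸ Q.subgroupOf Rstar) ≃* (QuaternionGroup 2 × QuaternionGroup 2)))
    (hwc : ∃ g : G, Subgroup.map (MulAut.conj g).toMonoidHom Z ≤ Q ∧
      Subgroup.map (MulAut.conj g).toMonoidHom Z ≠ Z)
    (S : Sylow 3 (Subgroup.normalizer (Z : Set G))) :
    Subgroup.map (Subgroup.map (Subgroup.normalizer (Z : Set G)).subtype S.toSubgroup).subtype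
        (Subgroup.center (Subgroup.map (Subgroup.normalizer (Z : Set G)).subtype S.toSubgroup)) = Z ∧
    Subgroup.normalizer ((Subgroup.map (Subgroup.normalizer (Z : Set G)).subtype S.toSubgroup : Subgroup G) : Set G) ≤ (Subgroup.normalizer (Z : Set G)) ∧
    ∃ T : Sylow 3 G, (T : Subgroup G) = Subgroup.map (Subgroup.normalizer (Z : Set G)).subtype S.toSubgroup :=
  stmt0_general Z Q hZcard hQcent hQnormM hQcard hQcenter hCMQ S
end

section
/- Let x ∈ G be an involution with x ∉ C_G(E), and suppose that for the unique non-trivial element e of Z(E), x is not conjugate to xe by any element of E. Then [E, x] ≤ C_E(x) and [E, x] is elementary abelian (every element of [E,x] has order dividing 2). -/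
/-!
Conjugation by the involution `x` inverts `c = ⁅f, x⁆` (`f ∈ E`), so `c` conjugates `x` to
`x * (c ^ 2)⁻¹`, and `(c ^ 2)⁻¹ ∈ Z(E)`; the non-conjugacy hypothesis therefore forces `c ^ 2 = 1`,
and then `c` commutes with `x`. For `f, g ∈ E` with `d = ⁅g, x⁆`, the element
`⁅g * f, x⁆ = (g c g⁻¹) d` is again an involution, so the involutions `g c g⁻¹ = ⁅g, c⁆ c` and `d`
commute; since `⁅g, c⁆ ∈ ⁅E, E⁆` is central in `E`, so do `c` and `d`. As `⟨x⟩ = {1, x}`,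
`⁅E, ⟨x⟩⁆` is generated by these pairwise commuting involutions.
-/

open scoped commutatorElement

namespace Subgroup

variable {G : Type*} [Group G]

theorem mem_closure_singleton_of_sq_eq_one {x y : G} (hx : x ^ 2 = 1)
    (hy : y ∈ closure {x}) : y = 1 ∨ y = x := by
  obtain ⟨n, rfl⟩ := mem_closure_singleton.mp hy
  rw [zpow_eq_zpow_emod' n hx]
  rcases Int.emod_two_eq_zero_or_one n with h | h <;> simp [h]

theorem commutator_closure_singleton_of_sq_eq_one (H : Subgroup G) {x : G} (hx : x ^ 2 = 1) :
    ⁅H, closure {x}⁆ = closure ((⁅·, x⁆) '' (H : Set G)) := by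
  rw [commutator_def]
  congr 1
  ext g
  constructor
  · rintro ⟨h, hh, y, hy, rfl⟩
    rcases mem_closure_singleton_of_sq_eq_one hx hy with rfl | rfl
    · exact ⟨1, H.one_mem, by simp⟩
    · exact ⟨h, hh, rfl⟩
  · rintro ⟨h, hh, rfl⟩
    exact ⟨h, hh, x, subset_closure rfl, rfl⟩

theorem sq_eq_one_of_mem_closure {S : Set G} (hcomm : ∀ a ∈ S, ∀ b ∈ S, Commute a b)
    (hsq : ∀ a ∈ S, a ^ 2 = 1) {w : G} (hw : w ∈ closure S) : w ^ 2 = 1 := by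
  have hcomm' : ∀ a ∈ closure S, ∀ b ∈ closure S, Commute a b := fun a ha b hb =>
    Set.centralizer_centralizer_comm_of_comm hcomm a (closure_le_centralizer_centralizer S ha)
      b (closure_le_centralizer_centralizer S hb)
  induction hw using closure_induction with
  | mem a ha => exact hsq a ha
  | one => exact one_pow 2
  | mul a b ha hb iha ihb => rw [(hcomm' a ha b hb).mul_pow, iha, ihb, one_mul]
  | inv a _ iha => rw [inv_pow, iha, inv_one]

theorem Normal.commutatorElement_mem {E : Subgroup G} (hE : E.Normal) {f : G} (hf : f ∈ E)
    (x : G) : ⁅f, x⁆ ∈ E := by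
  rw [commutatorElement_def, mul_assoc, mul_assoc, ← mul_assoc x]
  exact mul_mem hf (hE.conj_mem _ (inv_mem hf) x)

end Subgroup

section Involution

variable {G : Type*} [Group G] {x : G}

theorem commute_of_sq_eq_one {a b : G} (ha : a ^ 2 = 1) (hb : b ^ 2 = 1) (hab : (a * b) ^ 2 = 1) :
    Commute a b := by
  rw [sq, ← eq_inv_iff_mul_eq_one] at ha hb hab
  calc a * b = (a * b)⁻¹ := hab
    _ = b * a := by rw [mul_inv_rev, ← ha, ← hb]

theorem commutatorElement_mul_of_sq_eq_one (hx : x ^ 2 = 1) (f : G) :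
    ⁅f, x⁆ * x = x * ⁅f, x⁆⁻¹ := by
  have hxx : x * x = 1 := sq x ▸ hx
  calc ⁅f, x⁆ * x = f * x * f⁻¹ := by simp [commutatorElement_def]
    _ = x * x * (f * x⁻¹ * f⁻¹) := by rw [hxx, inv_eq_of_mul_eq_one_right hxx, one_mul]
    _ = x * ⁅f, x⁆⁻¹ := by simp [commutatorElement_def, mul_assoc]

theorem commutatorElement_conj_of_sq_eq_one (hx : x ^ 2 = 1) (f : G) :
    ⁅f, x⁆ * x * ⁅f, x⁆⁻¹ = x * (⁅f, x⁆ ^ 2)⁻¹ := by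
  rw [commutatorElement_mul_of_sq_eq_one hx, mul_assoc, ← mul_inv_rev, ← sq]

theorem commute_commutatorElement_of_sq_eq_one (hx : x ^ 2 = 1) {f : G} (hf : ⁅f, x⁆ ^ 2 = 1) :
    Commute x ⁅f, x⁆ := by
  have hinv : ⁅f, x⁆⁻¹ = ⁅f, x⁆ := inv_eq_of_mul_eq_one_right (sq ⁅f, x⁆ ▸ hf)
  rw [commute_iff_eq, commutatorElement_mul_of_sq_eq_one hx, hinv]

variable {E : Subgroup G}

theorem sq_commutatorElement_eq_one {Z : Subgroup G} (hE : E.Normal) (hSq : ∀ y ∈ E, y ^ 2 ∈ Z)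
    (hx : x ^ 2 = 1) (hnotconj : ∀ e ∈ Z, e ≠ 1 → ¬ ∃ f ∈ E, f * x * f⁻¹ = x * e)
    {f : G} (hf : f ∈ E) : ⁅f, x⁆ ^ 2 = 1 := by
  have hc := hE.commutatorElement_mem hf x
  by_contra h
  exact hnotconj _ (inv_mem (hSq _ hc)) (inv_ne_one.mpr h)
    ⟨_, hc, commutatorElement_conj_of_sq_eq_one hx f⟩

theorem commute_commutatorElement_commutatorElement (hE : E.Normal)
    (hEE : ⁅E, E⁆ ≤ Subgroup.centralizer E) (hsq : ∀ f ∈ E, ⁅f, x⁆ ^ 2 = 1)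
    {f g : G} (hf : f ∈ E) (hg : g ∈ E) : Commute ⁅f, x⁆ ⁅g, x⁆ := by
  have hc := hE.commutatorElement_mem hf x
  have hd := hE.commutatorElement_mem hg x
  have hconj : Commute (g * ⁅f, x⁆ * g⁻¹) ⁅g, x⁆ := by
    refine commute_of_sq_eq_one ?_ (hsq g hg) ?_
    · rw [conj_pow, hsq f hf, mul_one, mul_inv_cancel]
    · rw [← commutatorElement_mul_left_eq_conj_mul]
      exact hsq _ (mul_mem hg hf)
  have hz : Commute ⁅g, ⁅f, x⁆⁆ ⁅g, x⁆ :=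
    (Subgroup.mem_centralizer_iff.mp (hEE (Subgroup.commutator_mem_commutator hg hc)) _ hd).symm
  have hconj_eq : g * ⁅f, x⁆ * g⁻¹ = ⁅g, ⁅f, x⁆⁆ * ⁅f, x⁆ := by
    rw [commutatorElement_def g, inv_mul_cancel_right]
  rw [hconj_eq] at hconj
  simpa only [inv_mul_cancel_left] using hz.inv_left.mul_left hconj

end Involution

theorem stmt8_general {G : Type*} [Group G]
    (E : Subgroup G) (hEnormal : E.Normal)
    (hComm : ⁅E, E⁆ = E ⊓ Subgroup.centralizer (E : Set G))
    (hSq : ∀ y ∈ E, y ^ 2 ∈ E ⊓ Subgroup.centralizer (E : Set G))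
    (x : G) (hx2 : x ^ 2 = 1)
    (hnotconj : ∀ e ∈ E ⊓ Subgroup.centralizer (E : Set G), e ≠ 1 →
      ¬ ∃ f ∈ E, f * x * f⁻¹ = x * e) :
    ⁅E, Subgroup.closure {x}⁆ ≤ E ⊓ Subgroup.centralizer {x} ∧
    ∀ w ∈ ⁅E, Subgroup.closure {x}⁆, w ^ 2 = 1 := by
  have hsq (f : G) (hf : f ∈ E) : ⁅f, x⁆ ^ 2 = 1 :=
    sq_commutatorElement_eq_one hEnormal hSq hx2 hnotconj hf
  rw [Subgroup.commutator_closure_singleton_of_sq_eq_one E hx2]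
  refine ⟨(Subgroup.closure_le _).mpr ?_, fun w => Subgroup.sq_eq_one_of_mem_closure ?_ ?_⟩
  · rintro _ ⟨f, hf, rfl⟩
    exact ⟨hEnormal.commutatorElement_mem hf x, Subgroup.mem_centralizer_singleton_iff.mpr
      (commute_commutatorElement_of_sq_eq_one hx2 (hsq f hf)).symm⟩
  · rintro _ ⟨f, hf, rfl⟩ _ ⟨g, hg, rfl⟩
    exact commute_commutatorElement_commutatorElement hEnormal (hComm.le.trans inf_le_right) hsq
      hf hg
  · rintro _ ⟨f, hf, rfl⟩
    exact hsq f hf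

/-- Let `E` be a finite extraspecial normal 2-subgroup of a group
`G` (so `Z(E) = E ∩ C_G(E)` has order 2, `[E,E] = Z(E)`, and squares of elements of
`E` lie in `Z(E)`).  Let `x ∈ G` be an involution not centralizing `E`, and suppose
that for the non-trivial element `e` of `Z(E)`, `x` is not `E`-conjugate to `x * e`.
Then `[E, x] ≤ C_E(x)` and `[E, x]` is elementary abelian. -/
theorem stmt8 {G : Type*} [Group G]
    (E : Subgroup G) (hEnormal : E.Normal) [Finite E]
    (hZcard : Nat.card (E ⊓ Subgroup.centralizer (E : Set G) : Subgroup G) = 2)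
    (hComm : ⁅E, E⁆ = E ⊓ Subgroup.centralizer (E : Set G))
    (hSq : ∀ y ∈ E, y ^ 2 ∈ E ⊓ Subgroup.centralizer (E : Set G))
    (x : G) (hx2 : x ^ 2 = 1) (hx1 : x ≠ 1)
    (hxE : x ∉ Subgroup.centralizer (E : Set G))
    (hnotconj : ∀ e ∈ E ⊓ Subgroup.centralizer (E : Set G), e ≠ 1 →
      ¬ ∃ f ∈ E, f * x * f⁻¹ = x * e) :
    ⁅E, Subgroup.closure {x}⁆ ≤ E ⊓ Subgroup.centralizer {x} ∧
    ∀ w ∈ ⁅E, Subgroup.closure {x}⁆, w ^ 2 = 1 :=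
  stmt8_general E hEnormal hComm hSq x hx2 hnotconj
end

section
/- For every Sylow 2-subgroup S of Sp_6(2), the natural module V = Fin 6 → ZMod 2 is uniserial as an S-module: the set of ZMod 2-submodules of V that are invariant under matrix–vector multiplication by every element of S is totally ordered by inclusion. -/
/-!
A regular unipotent element of `Sp₆(2)`, whose matrix is a single unipotent Jordan block, has
order 8, so by Sylow's theorem every Sylow 2-subgroup contains a conjugate `x` of it. A subspace
invariant under `x` is invariant under `N = x - 1`, which is nilpotent of index `6 = dim V`. The
kernels of the powers of such an `N` grow by exactly one dimension at each step, and an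
`N`-invariant subspace `U` of dimension `d` is killed by `N ^ d`; hence `U = ker (N ^ d)`, and the
kernels of the powers of `N` form a chain.
-/

open Module LinearMap

theorem Module.End.ker_pow_le_ker_pow_of_le {R M : Type*} [Semiring R] [AddCommMonoid M]
    [Module R M] (f : End R M) {m n : ℕ} (h : m ≤ n) : ker (f ^ m) ≤ ker (f ^ n) := by
  rw [← Nat.sub_add_cancel h, pow_add]
  exact ker_le_ker_comp _ _

section Nilpotent

variable {K V : Type*} [Field K] [AddCommGroup V] [Module K V] [FiniteDimensional K V]
  {f : Module.End K V}

theorem IsNilpotent.pow_finrank_eq_zero (hf : IsNilpotent f) : f ^ finrank K V = 0 := by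
  simpa only [hf.charpoly_eq_X_pow_finrank, map_pow, Polynomial.aeval_X] using
    f.aeval_self_charpoly

namespace Module.End

theorem ker_pow_lt_ker_pow_succ (hnil : IsNilpotent f) (hf : f ^ (finrank K V - 1) ≠ 0)
    {k : ℕ} (hk : k < finrank K V) : ker (f ^ k) < ker (f ^ (k + 1)) := by
  refine lt_of_le_of_ne (f.ker_pow_le_ker_pow_of_le k.le_succ) fun h ↦ hf ?_
  have hfk : f ^ k = 0 := by
    rw [← ker_eq_top, ker_pow_constant h (finrank K V - k), Nat.add_sub_cancel' hk.le,
      hnil.pow_finrank_eq_zero, ker_zero]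
  rw [← Nat.sub_add_cancel (Nat.le_sub_one_of_lt hk), pow_add, hfk, mul_zero]

theorem finrank_ker_pow_le (hnil : IsNilpotent f) (hf : f ^ (finrank K V - 1) ≠ 0)
    {k : ℕ} (hk : k ≤ finrank K V) : finrank K (ker (f ^ k)) ≤ k := by
  suffices ∀ d k, k + d = finrank K V → finrank K (ker (f ^ k)) + d ≤ finrank K V by
    have := this _ k (Nat.add_sub_cancel' hk)
    omega
  intro d
  induction d with
  | zero => exact fun k _ ↦ Submodule.finrank_le _
  | succ d ih =>
    intro k hkd
    have hlt := Submodule.finrank_lt_finrank_of_lt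
      (ker_pow_lt_ker_pow_succ hnil hf (k := k) (by omega))
    have := ih (k + 1) (by omega)
    omega

theorem eq_ker_pow_finrank_of_mem_invtSubmodule (hnil : IsNilpotent f)
    (hf : f ^ (finrank K V - 1) ≠ 0) {U : Submodule K V} (hU : U ∈ f.invtSubmodule) :
    U = ker (f ^ finrank K U) := by
  have hle : U ≤ ker (f ^ finrank K U) := fun x hx ↦ by
    have h0 := (isNilpotent.restrict hU hnil).pow_finrank_eq_zero
    rw [pow_restrict _ hU] at h0
    exact congr_arg Subtype.val (LinearMap.congr_fun h0 ⟨x, hx⟩)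
  exact Submodule.eq_of_le_of_finrank_le hle
    (finrank_ker_pow_le hnil hf (Submodule.finrank_le U))

theorem isChain_invtSubmodule (hnil : IsNilpotent f) (hf : f ^ (finrank K V - 1) ≠ 0) :
    IsChain (· ≤ ·) (f.invtSubmodule : Set (Submodule K V)) := by
  intro U hU W hW _
  rw [eq_ker_pow_finrank_of_mem_invtSubmodule hnil hf hU,
    eq_ker_pow_finrank_of_mem_invtSubmodule hnil hf hW]
  exact (le_total _ _).imp f.ker_pow_le_ker_pow_of_le f.ker_pow_le_ker_pow_of_le

end Module.End

end Nilpotent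

theorem Sylow.exists_conj_mem_of_pow_eq_one {G : Type*} [Group G] {p : ℕ} [Fact p.Prime]
    [Finite (Sylow p G)] (S : Sylow p G) {x : G} {k : ℕ} (hx : x ^ p ^ k = 1) :
    ∃ g : G, g * x * g⁻¹ ∈ S := by
  have hpx : IsPGroup p (Subgroup.zpowers x) :=
    .of_card_dvd_pow (Nat.card_zpowers x ▸ orderOf_dvd_of_pow_eq_one hx)
  obtain ⟨Q, hQ⟩ := hpx.exists_le_sylow
  obtain ⟨g, rfl⟩ := MulAction.exists_smul_eq G Q S
  exact ⟨g, Subgroup.smul_mem_pointwise_smul x (MulAut.conj g) Q (hQ (Subgroup.mem_zpowers x))⟩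

namespace Matrix

variable {n R K : Type*} [Fintype n] [DecidableEq n]

/-- A single unipotent Jordan block, up to conjugacy. -/
def IsRegularUnipotent [Ring R] (M : Matrix n n R) : Prop :=
  IsNilpotent (M - 1) ∧ (M - 1) ^ (Fintype.card n - 1) ≠ 0

theorem IsRegularUnipotent.conj [Ring R] {M : Matrix n n R} (hM : M.IsRegularUnipotent)
    (u : (Matrix n n R)ˣ) : IsRegularUnipotent (u * M * u⁻¹ : Matrix n n R) := by
  have hpow (k : ℕ) : (u * M * u⁻¹ - 1 : Matrix n n R) ^ k = u * (M - 1) ^ k * u⁻¹ := by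
    rw [← Units.conj_pow, mul_sub, sub_mul, mul_one, Units.mul_inv]
  obtain ⟨⟨k, hk⟩, hne⟩ := hM
  refine ⟨⟨k, by rw [hpow, hk, mul_zero, zero_mul]⟩, ?_⟩
  rwa [hpow, Ne, Units.mul_left_eq_zero, Units.mul_right_eq_zero]

theorem IsRegularUnipotent.map_conj [Ring R] {G : Type*} [Group G] (ρ : G →* Matrix n n R)
    {x : G} (hx : (ρ x).IsRegularUnipotent) (g : G) : (ρ (g * x * g⁻¹)).IsRegularUnipotent := by
  simpa using hx.conj (Units.map ρ (toUnits g))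

theorem IsRegularUnipotent.isChain_invtSubmodule [Field K] {M : Matrix n n K}
    (hM : M.IsRegularUnipotent) :
    IsChain (· ≤ ·) (Module.End.invtSubmodule (toLin' M) : Set (Submodule K (n → K))) := by
  refine (Module.End.isChain_invtSubmodule (f := toLin' (M - 1)) ?_ ?_).mono fun U hU ↦ ?_
  · exact (isNilpotent_toLin'_iff _).mpr hM.1
  · rw [finrank_fintype_fun_eq_card, ← toLin'_pow, Ne, LinearEquiv.map_eq_zero_iff]
    exact hM.2
  · intro v hv
    rw [map_sub, toLin'_one]
    exact U.sub_mem (hU hv) hv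

end Matrix

open Matrix

/-- `fromBlocks P (P * E₃₃) 0 Pᵀ⁻¹` for the unipotent Jordan block `P`; it is symplectic because
`P * E₃₃ * Pᵀ` is symmetric. -/
def sp6RegularUnipotent : symplecticGroup (Fin 3) (ZMod 2) :=
  ⟨fromBlocks !![1, 1, 0; 0, 1, 1; 0, 0, 1] !![0, 0, 0; 0, 0, 1; 0, 0, 1] 0
    !![1, 0, 0; 1, 1, 0; 1, 1, 1], by rw [SymplecticGroup.mem_iff]; decide⟩

theorem sp6RegularUnipotent_pow : sp6RegularUnipotent ^ 2 ^ 3 = 1 := by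
  decide

theorem isRegularUnipotent_sp6RegularUnipotent :
    IsRegularUnipotent (sp6RegularUnipotent : Matrix (Fin 3 ⊕ Fin 3) (Fin 3 ⊕ Fin 3) (ZMod 2)) :=
  ⟨⟨6, by decide⟩, by decide⟩

/-- For every Sylow 2-subgroup `S` of `Sp₆(2)`, the natural module
`V = (Fin 3 ⊕ Fin 3) → ZMod 2` is uniserial as an `S`-module: the `S`-invariant
`GF(2)`-submodules of `V` are totally ordered by inclusion. -/
theorem stmt13 (S : Sylow 2 (Matrix.symplecticGroup (Fin 3) (ZMod 2))) :
    ∀ U W : Submodule (ZMod 2) ((Fin 3 ⊕ Fin 3) → ZMod 2),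
      (∀ g ∈ (S : Subgroup (Matrix.symplecticGroup (Fin 3) (ZMod 2))), ∀ v ∈ U,
        Matrix.mulVec (g : Matrix (Fin 3 ⊕ Fin 3) (Fin 3 ⊕ Fin 3) (ZMod 2)) v ∈ U) →
      (∀ g ∈ (S : Subgroup (Matrix.symplecticGroup (Fin 3) (ZMod 2))), ∀ v ∈ W,
        Matrix.mulVec (g : Matrix (Fin 3 ⊕ Fin 3) (Fin 3 ⊕ Fin 3) (ZMod 2)) v ∈ W) →
      U ≤ W ∨ W ≤ U := by
  intro U W hU hW
  obtain ⟨g, hg⟩ := S.exists_conj_mem_of_pow_eq_one sp6RegularUnipotent_pow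
  have hreg := IsRegularUnipotent.map_conj (symplecticGroup (Fin 3) (ZMod 2)).subtype
    (x := sp6RegularUnipotent) isRegularUnipotent_sp6RegularUnipotent g
  -- generalizing keeps the elaborator from unfolding the explicit matrix
  generalize g * sp6RegularUnipotent * g⁻¹ = x at hg hreg
  exact hreg.isChain_invtSubmodule.total (hU x hg) (hW x hg)
end

section
/- Let W be a 7-dimensional vector space over ZMod 2 equipped with a linear representation ρ of Sp_6(2) such that the fixed subspace C_W(Sp_6(2)) = {w ∈ W : ρ(g)w = w for all g ∈ Sp_6(2)} is 1-dimensional and the induced representation on the quotient W / C_W(Sp_6(2)) is equivalent, via an Sp_6(2)-equivariant ZMod 2-linear isomorphism, to the natural module Fin 6 → ZMod 2 with the matrix–vector multiplication action. Then for every Sylow 2-subgroup S of Sp_6(2), the fixed subspace C_W(S) = {w ∈ W : ρ(g)w = w for all g ∈ S} strictly contains C_W(Sp_6(2)); in particular C_W(S) has dimension at least 2. -/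
/-!
Let `C = C_W(Sp₆(2))`, let `π : W → V₆` be the quotient map and `t` the symplectic transvection
with centre `e₀`. Since `ρ t - 1` kills `C`, it factors as `ψ ∘ π` with `ψ : V₆ → W` linear.
The stabiliser of `e₀` centralises `t`, so it commutes with `ψ`; and `ψ` maps `e₀^⊥`, the fixed
space of `t`, into `C`. Hence `ψ` is invariant under the stabiliser on `e₀^⊥`, and comparing
`ψ x` with `ψ (T_u x) = ψ x + ψ u` for transvections `T_u` in the stabiliser with `ω(u, x) = 1`
shows that `ψ` vanishes there (`ψ e₀ = 0` because `(ρ t - 1)² = 0`). So `ψ f₀` is a lift of `e₀`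
fixed by the stabiliser of `e₀`. A Sylow 2-subgroup `S` fixes `0` and `|V₆|` is even, so `S`
fixes some `v ≠ 0`; then `v = g e₀` by transitivity, and `ρ g (ψ f₀)` is an `S`-fixed vector
outside `C`.
-/

open Matrix Sum

namespace Representation

variable {k G V W : Type*} [CommSemiring k] [Group G] [AddCommMonoid V] [Module k V]
  [AddCommMonoid W] [Module k W]

theorem apply_apply_eq_of_stabilizer (ρ : Representation k G W) (σ : Representation k G V)
    {v : V} {w : W} (hw : ∀ h, σ h v = v → ρ h w = w) (g h : G)
    (hh : σ h (σ g v) = σ g v) : ρ h (ρ g w) = ρ g w := by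
  have hconj : σ (g⁻¹ * h * g) v = v := by
    simp only [map_mul, Module.End.mul_apply, hh, inv_self_apply]
  calc ρ h (ρ g w) = ρ g (ρ (g⁻¹ * h * g) w) := by
        simp only [map_mul, Module.End.mul_apply, self_inv_apply]
    _ = ρ g w := by rw [hw _ hconj]

theorem exists_ne_zero_forall_apply_eq {p : ℕ} [Fact p.Prime] {V : Type*} [AddCommGroup V]
    [Module (ZMod p) V] [Finite V] [Nontrivial V] (σ : Representation (ZMod p) G V)
    (hG : IsPGroup p G) : ∃ v ≠ 0, ∀ g, σ g v = v := by
  let := MulAction.compHom V σ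
  obtain ⟨v, hv⟩ := exists_ne (0 : V)
  have hp : p ∣ Nat.card V :=
    addOrderOf_eq_prime (ZModModule.char_nsmul_eq_zero p v) hv ▸ addOrderOf_dvd_natCard v
  obtain ⟨w, hw, hw0⟩ :=
    hG.exists_fixed_point_of_prime_dvd_card_of_fixed_point V hp (a := 0) fun g => map_zero (σ g)
  exact ⟨w, hw0.symm, hw⟩

end Representation

namespace Matrix

variable {l R : Type*} [Fintype l] [DecidableEq l] [CommRing R]

variable (l R) in
def symplecticRep : Representation R (symplecticGroup l R) (l ⊕ l → R) :=
  (toLinAlgEquiv' : Matrix (l ⊕ l) (l ⊕ l) R ≃ₐ[R] _).toRingEquiv.toMonoidHom.comp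
    (symplecticGroup l R).subtype

def symplecticForm (x y : l ⊕ l → R) : R := x ⬝ᵥ (J l R *ᵥ y)

theorem symplecticForm_self (x : l ⊕ l → R) : symplecticForm x x = 0 := by
  simp [symplecticForm, J, fromBlocks_mulVec, dotProduct, Fintype.sum_sum_type, neg_mulVec,
    mul_comm]

theorem symplecticForm_swap (x y : l ⊕ l → R) : symplecticForm y x = -symplecticForm x y := by
  rw [symplecticForm, symplecticForm, dotProduct_comm, dotProduct_mulVec, ← mulVec_transpose,
    J_transpose, neg_mulVec, neg_dotProduct, neg_neg]

theorem symplecticForm_add_left (x y z : l ⊕ l → R) :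
    symplecticForm (x + y) z = symplecticForm x z + symplecticForm y z :=
  add_dotProduct x y _

theorem symplecticForm_sub_right (x y z : l ⊕ l → R) :
    symplecticForm x (y - z) = symplecticForm x y - symplecticForm x z := by
  rw [symplecticForm, mulVec_sub, dotProduct_sub, symplecticForm, symplecticForm]

theorem symplecticForm_mulVec_mulVec {A : Matrix (l ⊕ l) (l ⊕ l) R}
    (hA : A ∈ symplecticGroup l R) (x y : l ⊕ l → R) :
    symplecticForm (A *ᵥ x) (A *ᵥ y) = symplecticForm x y := by
  rw [symplecticForm, symplecticForm, ← vecMul_transpose, ← dotProduct_mulVec, mulVec_mulVec,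
    mulVec_mulVec, SymplecticGroup.mem_iff'.mp hA]

def symplecticTransvection (u : l ⊕ l → R) : Matrix (l ⊕ l) (l ⊕ l) R :=
  1 + vecMulVec u (u ᵥ* J l R)

theorem symplecticTransvection_mulVec (u x : l ⊕ l → R) :
    symplecticTransvection u *ᵥ x = x + symplecticForm u x • u := by
  rw [symplecticTransvection, add_mulVec, one_mulVec, vecMulVec_mulVec, ← dotProduct_mulVec,
    op_smul_eq_smul, symplecticForm]

theorem mul_symplecticTransvection {A : Matrix (l ⊕ l) (l ⊕ l) R}
    (hA : A ∈ symplecticGroup l R) (u : l ⊕ l → R) :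
    A * symplecticTransvection u = symplecticTransvection (A *ᵥ u) * A := by
  refine ext_iff_mulVec.mpr fun x => ?_
  rw [← mulVec_mulVec, ← mulVec_mulVec, symplecticTransvection_mulVec,
    symplecticTransvection_mulVec, mulVec_add, mulVec_smul, symplecticForm_mulVec_mulVec hA]

theorem symplecticTransvection_add_mulVec [CharP R 2] {x v : l ⊕ l → R}
    (h : symplecticForm v x = 1) : symplecticTransvection (x + v) *ᵥ x = v := by
  rw [symplecticTransvection_mulVec, symplecticForm_add_left, symplecticForm_self, h, zero_add,
    one_smul, ← add_assoc, ← two_smul R x, CharTwo.two_eq_zero, zero_smul, zero_add]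

end Matrix

notation "V₆" => Fin 3 ⊕ Fin 3 → ZMod 2
notation "Sp₆" => Matrix.symplecticGroup (Fin 3) (ZMod 2)

namespace Sp6

def e (i : Fin 3) : V₆ := Pi.single (inl i) 1

def f (i : Fin 3) : V₆ := Pi.single (inr i) 1

def transvection (u : V₆) : Sp₆ :=
  ⟨symplecticTransvection u, SymplecticGroup.mem_iff.mpr (by revert u; decide)⟩

@[simp]
theorem coe_transvection (u : V₆) :
    (transvection u : Matrix (Fin 3 ⊕ Fin 3) (Fin 3 ⊕ Fin 3) (ZMod 2)) =
      symplecticTransvection u :=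
  rfl

theorem transvection_e_zero_mul_self : transvection (e 0) * transvection (e 0) = 1 :=
  Subtype.ext (by decide)

theorem exists_mulVec_e_zero_eq {v : V₆} (hv : v ≠ 0) :
    ∃ g : Sp₆, (g : Matrix (Fin 3 ⊕ Fin 3) (Fin 3 ⊕ Fin 3) (ZMod 2)) *ᵥ e 0 = v := by
  -- pass from `e 0` to `v` through a vector pairing nontrivially with both
  obtain ⟨w, hwe, hvw⟩ : ∃ w : V₆, symplecticForm w (e 0) = 1 ∧ symplecticForm v w = 1 := by
    revert v; decide
  refine ⟨transvection (w + v) * transvection (e 0 + w), ?_⟩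
  rw [Submonoid.coe_mul, ← mulVec_mulVec]
  exact (congrArg _ (symplecticTransvection_add_mulVec hwe)).trans
    (symplecticTransvection_add_mulVec hvw)

theorem eq_sum_of_symplecticForm_e_zero_eq_zero :
    ∀ x : V₆, symplecticForm (e 0) x = 0 →
      x = x (inl 0) • e 0 + x (inl 1) • e 1 + x (inl 2) • e 2 + x (inr 1) • f 1
        + x (inr 2) • f 2 := by
  decide

theorem linearMap_eq_zero_of_stabilizer_invariant {M : Type*} [AddCommGroup M]
    [Module (ZMod 2) M] (ψ : V₆ →ₗ[ZMod 2] M)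
    (hψ : ∀ h : Sp₆, (h : Matrix (Fin 3 ⊕ Fin 3) (Fin 3 ⊕ Fin 3) (ZMod 2)) *ᵥ e 0 = e 0 →
      ∀ x, symplecticForm (e 0) x = 0 → ψ (h *ᵥ x) = ψ x)
    (h0 : ψ (e 0) = 0) {x : V₆} (hx : symplecticForm (e 0) x = 0) : ψ x = 0 := by
  have hvanish (u y : V₆) (hu : symplecticForm (e 0) u = 0) (hy : symplecticForm (e 0) y = 0)
      (huy : symplecticForm u y = 1) : ψ u = 0 := by
    have hfix : (transvection u : Matrix _ _ (ZMod 2)) *ᵥ e 0 = e 0 := by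
      rw [coe_transvection, symplecticTransvection_mulVec, symplecticForm_swap, hu, neg_zero,
        zero_smul, add_zero]
    have := hψ (transvection u) hfix y hy
    rwa [coe_transvection, symplecticTransvection_mulVec, huy, one_smul, map_add,
      add_eq_left] at this
  rw [eq_sum_of_symplecticForm_e_zero_eq_zero x hx]
  simp only [map_add, map_smul, h0, hvanish (e 1) (f 1) (by decide) (by decide) (by decide),
    hvanish (e 2) (f 2) (by decide) (by decide) (by decide),
    hvanish (f 1) (e 1) (by decide) (by decide) (by decide),
    hvanish (f 2) (e 2) (by decide) (by decide) (by decide), smul_zero, add_zero]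

theorem exists_lift_e_zero_fixed {W : Type*} [AddCommGroup W] [Module (ZMod 2) W]
    (ρ : Representation (ZMod 2) Sp₆ W) (π : W →ₗ[ZMod 2] V₆)
    (hπ : ∀ g w, π (ρ g w) = (g : Matrix (Fin 3 ⊕ Fin 3) (Fin 3 ⊕ Fin 3) (ZMod 2)) *ᵥ π w)
    (hsurj : Function.Surjective π) (hker : LinearMap.ker π ≤ ρ.invariants) :
    ∃ w, π w = e 0 ∧ ∀ h : Sp₆,
      (h : Matrix (Fin 3 ⊕ Fin 3) (Fin 3 ⊕ Fin 3) (ZMod 2)) *ᵥ e 0 = e 0 → ρ h w = w := by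
  set t := transvection (e 0)
  have ht : (t : Matrix (Fin 3 ⊕ Fin 3) (Fin 3 ⊕ Fin 3) (ZMod 2)) =
      symplecticTransvection (e 0) :=
    rfl
  obtain ⟨ψ, hψ⟩ : ∃ ψ : V₆ →ₗ[ZMod 2] W, ∀ w, ψ (π w) = ρ t w - w :=
    ⟨(LinearMap.ker π).liftQ (ρ t - 1) (fun w hw => by simp [hker hw t]) ∘ₗ
      (π.quotKerEquivOfSurjective hsurj).symm, fun w => by simp⟩
  have hπψ (x : V₆) : π (ψ x) = symplecticForm (e 0) x • e 0 := by
    obtain ⟨w, rfl⟩ := hsurj x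
    rw [hψ, map_sub, hπ, ht, symplecticTransvection_mulVec, add_sub_cancel_left]
  have hψ_comm (h : Sp₆) (hh : (h : Matrix _ _ (ZMod 2)) *ᵥ e 0 = e 0) (x : V₆) :
      ψ (h *ᵥ x) = ρ h (ψ x) := by
    obtain ⟨w, rfl⟩ := hsurj x
    have hth : h * t = t * h := Subtype.ext <| by
      rw [Submonoid.coe_mul, Submonoid.coe_mul, ht, mul_symplecticTransvection h.2, hh]
    rw [← hπ, hψ, hψ, map_sub, ← Module.End.mul_apply, ← map_mul, ← hth, map_mul,
      Module.End.mul_apply]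
  -- `(ρ t - 1)² = 0`, as `t² = 1` in characteristic 2
  have hψ_e : ψ (e 0) = 0 := by
    obtain ⟨u, hu⟩ := hsurj (f 0)
    have hπu : π (ρ t u - u) = e 0 := by
      rw [← hψ, hu, hπψ, show symplecticForm (e 0) (f 0) = 1 by decide, one_smul]
    rw [← hπu, hψ, map_sub, ← Module.End.mul_apply, ← map_mul, transvection_e_zero_mul_self,
      map_one, Module.End.one_apply, ← neg_sub (ρ t u) u, ZModModule.neg_eq_self, sub_self]
  refine ⟨ψ (f 0), by rw [hπψ, show symplecticForm (e 0) (f 0) = 1 by decide, one_smul],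
    fun h hh => ?_⟩
  rw [← hψ_comm h hh, ← sub_eq_zero, ← map_sub]
  refine linearMap_eq_zero_of_stabilizer_invariant ψ (fun h' hh' x hx => ?_) hψ_e ?_
  · rw [hψ_comm h' hh']
    exact hker (by simp [hπψ, hx]) h'
  · have := symplecticForm_mulVec_mulVec h.2 (e 0) (f 0)
    rw [hh] at this
    rw [symplecticForm_sub_right, this, sub_self]

end Sp6

/-- Let `W` be a 7-dimensional `GF(2)`-representation of `Sp₆(2)`
whose fixed subspace `C_W(Sp₆(2))` is 1-dimensional and such that the induced
representation on `W / C_W(Sp₆(2))` is equivariantly isomorphic to the natural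
6-dimensional module.  Then for every Sylow 2-subgroup `S` of `Sp₆(2)`, the fixed
subspace `C_W(S)` strictly contains `C_W(Sp₆(2))`; in particular it has dimension
at least 2. -/
theorem stmt15 {W : Type*} [AddCommGroup W] [Module (ZMod 2) W]
    (hW : Module.finrank (ZMod 2) W = 7)
    (ρ : Representation (ZMod 2) (Matrix.symplecticGroup (Fin 3) (ZMod 2)) W)
    (hfix : Module.finrank (ZMod 2)
      ↥(⨅ g : Matrix.symplecticGroup (Fin 3) (ZMod 2),
        LinearMap.eqLocus (ρ g) LinearMap.id : Submodule (ZMod 2) W) = 1)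
    (e : (W ⧸ (⨅ g : Matrix.symplecticGroup (Fin 3) (ZMod 2),
        LinearMap.eqLocus (ρ g) LinearMap.id : Submodule (ZMod 2) W)) ≃ₗ[ZMod 2]
        ((Fin 3 ⊕ Fin 3) → ZMod 2))
    (he : ∀ (g : Matrix.symplecticGroup (Fin 3) (ZMod 2)) (w : W),
      e (Submodule.Quotient.mk (ρ g w)) =
        Matrix.mulVec (g : Matrix (Fin 3 ⊕ Fin 3) (Fin 3 ⊕ Fin 3) (ZMod 2))
          (e (Submodule.Quotient.mk w))) :
    ∀ S : Sylow 2 (Matrix.symplecticGroup (Fin 3) (ZMod 2)),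
      (⨅ g : Matrix.symplecticGroup (Fin 3) (ZMod 2),
          LinearMap.eqLocus (ρ g) LinearMap.id : Submodule (ZMod 2) W) <
        (⨅ g ∈ (S : Subgroup (Matrix.symplecticGroup (Fin 3) (ZMod 2))),
          LinearMap.eqLocus (ρ g) LinearMap.id) ∧
      2 ≤ Module.finrank (ZMod 2)
        ↥(⨅ g ∈ (S : Subgroup (Matrix.symplecticGroup (Fin 3) (ZMod 2))),
          LinearMap.eqLocus (ρ g) LinearMap.id : Submodule (ZMod 2) W) := by
  intro S
  let C : Submodule (ZMod 2) W := ⨅ g : Sp₆, LinearMap.eqLocus (ρ g) LinearMap.id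
  have hC (w : W) : w ∈ C ↔ ∀ g, ρ g w = w := by simp [C, Submodule.mem_iInf]
  let π : W →ₗ[ZMod 2] V₆ := e.toLinearMap ∘ₗ C.mkQ
  have hπC (w : W) : π w = 0 ↔ w ∈ C := by simp [π]
  obtain ⟨w₀, hw₀, hw₀_fix⟩ := Sp6.exists_lift_e_zero_fixed ρ π he
    (e.surjective.comp C.mkQ_surjective) fun w hw => (hC w).1 ((hπC w).1 hw)
  obtain ⟨v, hv, hv_fix⟩ :=
    Representation.exists_ne_zero_forall_apply_eq
      ((symplecticRep (Fin 3) (ZMod 2)).comp (S : Subgroup Sp₆).subtype) S.isPGroup'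
  obtain ⟨g, rfl⟩ := Sp6.exists_mulVec_e_zero_eq hv
  have hw_S : ρ g w₀ ∈ ⨅ h ∈ (S : Subgroup Sp₆), LinearMap.eqLocus (ρ h) LinearMap.id := by
    simp only [Submodule.mem_iInf, LinearMap.mem_eqLocus]
    exact fun h hh => ρ.apply_apply_eq_of_stabilizer (symplecticRep (Fin 3) (ZMod 2)) hw₀_fix g h
      (hw₀ ▸ hv_fix ⟨h, hh⟩)
  have hw_C : ρ g w₀ ∉ C := fun hmem => hv (hw₀ ▸ (he g w₀).symm.trans ((hπC _).2 hmem))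
  have hlt := SetLike.lt_iff_le_and_exists.2
    ⟨le_iInf₂ fun h _ => iInf_le _ h, ρ g w₀, hw_S, hw_C⟩
  have := Module.finite_of_finrank_eq_succ hW
  have hrank := Submodule.finrank_lt_finrank_of_lt hlt
  exact ⟨hlt, by omega⟩
end

section
/- Let g be an F-linear automorphism of V such that for every v ∈ V, q(v) = 0 if and only if q(g v) = 0 (i.e. g stabilizes the set of singular 1-dimensional subspaces of V). Then g preserves q up to similarity: there exists a non-zero scalar c ∈ F such that q(g v) = c · q(v) for all v ∈ V. -/
/-!
Take a hyperbolic pair `u, v` for `q` and put `q' = q ∘ g`, which has the same singular vectors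
as `q`. On the line `w + F z` through a vector `w` orthogonal to a singular `z`, `q` is constant;
if `w` were not `q'`-orthogonal to `z`, `q'` would vanish somewhere on that line, making `w` and
then `w + z` singular for both forms, which forces `polar q' z w = 0` after all. Hence
`polar q' u` and `polar q u` have the same kernel, so `polar q' u = c • polar q u` with
`c = polar q' u v ≠ 0`. Any `w` with `polar q u w ≠ 0` can be moved along `u` to a singular
vector, which gives `q' w = c * q w`; the remaining `w` are reached through `w + v`.
-/

namespace QuadraticMap

section CommRing

variable {R M : Type*} [CommRing R] [AddCommGroup M] [Module R M]

theorem map_add_smul (Q : QuadraticMap R M R) (x y : M) (a : R) :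
    Q (x + a • y) = Q x + a * a * Q y + a * polar Q x y := by
  rw [QuadraticMap.map_add (⇑Q), QuadraticMap.map_smul, polar_smul_right, smul_eq_mul, smul_eq_mul]

end CommRing

variable {F V : Type*} [Field F] [AddCommGroup V] [Module F V]

theorem exists_isotropic_polar_eq_one {Q : QuadraticForm F V}
    (hQ : (polarBilin Q).SeparatingLeft) {u : V} (hu0 : u ≠ 0) (hu : Q u = 0) :
    ∃ v, Q v = 0 ∧ polar Q u v = 1 := by
  obtain ⟨w, hw⟩ : ∃ w, polar Q u w ≠ 0 := by
    by_contra! h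
    exact hu0 (hQ u fun w => by simpa using h w)
  obtain ⟨v, huv⟩ : ∃ v, polar Q u v = 1 :=
    ⟨(polar Q u w)⁻¹ • w, by rw [polar_smul_right, smul_eq_mul, inv_mul_cancel₀ hw]⟩
  refine ⟨v - Q v • u, ?_, ?_⟩
  · rw [sub_eq_add_neg, ← neg_smul, map_add_smul, hu, polar_comm, huv]
    ring
  · rw [polar_sub_right, polar_smul_right, polar_self, hu, huv]
    simp

section SameSingularVectors

variable {Q Q' : QuadraticForm F V} (hQQ' : ∀ x, Q x = 0 ↔ Q' x = 0)
include hQQ'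

theorem polar_eq_zero_of_isotropic_of_polar_eq_zero {z w : V} (hz : Q z = 0)
    (hzw : polar Q z w = 0) : polar Q' z w = 0 := by
  have hz' : Q' z = 0 := (hQQ' z).mp hz
  have hQ_line (t : F) : Q (w + t • z) = Q w := by
    rw [map_add_smul, hz, polar_comm, hzw]
    ring
  by_contra h
  rw [polar_comm] at h
  -- the line `w + t • z` meets the `Q'`-singular vectors, so `Q w = 0`
  have hw : Q w = 0 := by
    rw [← hQ_line (-Q' w / polar Q' w z), hQQ', map_add_smul, hz']
    field_simp
    ring
  have hwz : Q' (w + (1 : F) • z) = 0 := (hQQ' _).mp (by rw [hQ_line, hw])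
  rw [map_add_smul, hz', (hQQ' w).mp hw] at hwz
  exact h (by linear_combination hwz)

theorem polar_eq_mul_polar_of_isotropic {u v : V} (hu : Q u = 0) (huv : polar Q u v = 1)
    (w : V) : polar Q' u w = polar Q' u v * polar Q u w := by
  have h := polar_eq_zero_of_isotropic_of_polar_eq_zero hQQ' hu
    (w := w - polar Q u w • v) (by rw [polar_sub_right, polar_smul_right, huv]; simp)
  rw [polar_sub_right, polar_smul_right, smul_eq_mul] at h
  linear_combination h

theorem apply_eq_mul_of_polar_ne_zero {u w : V} {c : F} (hu : Q u = 0)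
    (hc : ∀ x, polar Q' u x = c * polar Q u x) (hw : polar Q u w ≠ 0) :
    Q' w = c * Q w := by
  have hsing : Q (w + (-Q w / polar Q u w) • u) = 0 := by
    rw [map_add_smul, hu, polar_comm Q w u]
    field_simp
    ring
  rw [hQQ', map_add_smul, (hQQ' u).mp hu, polar_comm Q' w u, hc] at hsing
  field_simp at hsing
  exact mul_right_cancel₀ (pow_ne_zero 2 hw) (by linear_combination hsing)

theorem exists_ne_zero_forall_eq_mul (hQ : (polarBilin Q).SeparatingLeft)
    (hiso : ∃ u, u ≠ 0 ∧ Q u = 0) : ∃ c : F, c ≠ 0 ∧ ∀ x, Q' x = c * Q x := by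
  obtain ⟨u, hu0, hu⟩ := hiso
  obtain ⟨v, hv, huv⟩ := exists_isotropic_polar_eq_one hQ hu0 hu
  set c := polar Q' u v
  have hcu := polar_eq_mul_polar_of_isotropic hQQ' hu huv
  have hcv : ∀ x, polar Q' v x = c * polar Q v x := by
    intro x
    rw [polar_eq_mul_polar_of_isotropic hQQ' hv (by rwa [polar_comm]) x, polar_comm Q' v u]
  have hc : c ≠ 0 := by
    have h : Q (u + v) ≠ 0 := by simp [QuadraticMap.map_add (⇑Q), hu, hv, huv]
    rw [Ne, hQQ', QuadraticMap.map_add (⇑Q'), (hQQ' u).mp hu, (hQQ' v).mp hv] at h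
    simpa using h
  refine ⟨c, hc, fun w => ?_⟩
  by_cases hw : polar Q u w = 0
  · have h := apply_eq_mul_of_polar_ne_zero hQQ' hu hcu (w := w + v)
      (by simp [polar_add_right, hw, huv])
    rw [QuadraticMap.map_add (⇑Q'), QuadraticMap.map_add (⇑Q), hv, (hQQ' v).mp hv, polar_comm Q',
      polar_comm Q, hcv] at h
    linear_combination h
  · exact apply_eq_mul_of_polar_ne_zero hQQ' hu hcu hw

end SameSingularVectors

end QuadraticMap

theorem stmt16_general {F V : Type*} [Field F] [AddCommGroup V] [Module F V]
    (q : QuadraticForm F V)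
    (hnd : LinearMap.BilinForm.Nondegenerate q.polarBilin)
    (hwitt : ∃ v : V, v ≠ 0 ∧ q v = 0)
    (g : V ≃ₗ[F] V)
    (hg : ∀ v : V, q v = 0 ↔ q (g v) = 0) :
    ∃ c : F, c ≠ 0 ∧ ∀ v : V, q (g v) = c * q v :=
  QuadraticMap.exists_ne_zero_forall_eq_mul (Q' := q.comp (g : V →ₗ[F] V)) hg hnd.1 hwitt

/-- Let `q` be a quadratic form on a finite-dimensional vector
space `V` over a field `F` with non-degenerate polar form and Witt index at least 1
(there is a non-zero singular vector).  If a linear automorphism `g` of `V`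
stabilizes the set of singular vectors (`q v = 0 ↔ q (g v) = 0` for all `v`), then
`g` preserves `q` up to similarity: there is a non-zero scalar `c` with
`q (g v) = c * q v` for all `v`. -/
theorem stmt16 {F V : Type*} [Field F] [AddCommGroup V] [Module F V]
    [FiniteDimensional F V]
    (q : QuadraticForm F V)
    (hnd : LinearMap.BilinForm.Nondegenerate q.polarBilin)
    (hwitt : ∃ v : V, v ≠ 0 ∧ q v = 0)
    (g : V ≃ₗ[F] V)
    (hg : ∀ v : V, q v = 0 ↔ q (g v) = 0) :
    ∃ c : F, c ≠ 0 ∧ ∀ v : V, q (g v) = c * q v :=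
  stmt16_general q hnd hwitt g hg
end

section
/- Assume [V,a] = C_V(b) and [V,b] = C_V(a), that these two subspaces are distinct and each has dimension 2 over ZMod p, and let v ∈ V with v ∉ [V,a] + [V,b]. Then there exists a quadratic form q on V whose polar form f(x,y) = q(x+y) − q(x) − q(y) is non-degenerate, which is invariant under a and b (q(a w) = q(w) and q(b w) = q(w) for all w ∈ V), and for which v is singular, i.e. q(v) = 0. -/
/-!
Put `N = a - 1` and `M = b - 1`. In characteristic `p`, `a ^ p = 1` makes `N` nilpotent, and the
hypotheses say `range N = ker M`, `range M = ker N`, so `NM = MN = 0`. As `v ∉ [V,a] + [V,b]`,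
this sum is a hyperplane and `[V,a] ∩ [V,b] = [V,a] ∩ ker N` is a line, so `N([V,a])` is an
`N`-invariant line, which the nilpotent `N` must kill: `N³ = 0`. Then `ker N² = [V,a] + [V,b]`,
so `N²v ≠ 0`. Symmetrically `M³ = 0` and `M²v ≠ 0`; both `N²v` and `M²v` lie on the line
`[V,a] ∩ [V,b]`, so `M²v = γ N²v` with `γ ≠ 0`. In the basis `N²v, Nv, Mv, v` the form
`4x₀x₃ - 2x₁² + 2x₁x₃ - 2γx₂² + 2γx₂x₃` is invariant under `a` and `b`, vanishes at `v`, and its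
polar form has determinant `-256γ`, which is nonzero for odd `p`.
-/

open Module LinearMap Matrix

theorem isNilpotent_sub_one_of_pow_expChar_eq_one {R : Type*} [Ring R] (p : ℕ) [ExpChar R p]
    {u : R} (hu : u ^ p = 1) : IsNilpotent (u - 1) :=
  ⟨p, by rw [sub_pow_expChar_of_commute p (Commute.one_right u), hu, one_pow, sub_self]⟩

theorem LinearEquiv.isNilpotent_sub_id_of_pow_eq_one {K V : Type*} [Field K] [AddCommGroup V]
    [Module K V] [Nontrivial V] (p : ℕ) [Fact p.Prime] [CharP K p] {e : V ≃ₗ[K] V}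
    (he : e ^ p = 1) : IsNilpotent (e.toLinearMap - LinearMap.id) := by
  have : CharP (Module.End K V) p := charP_of_injective_algebraMap' K p
  refine isNilpotent_sub_one_of_pow_expChar_eq_one p ?_
  have h := congr(LinearEquiv.automorphismGroup.toLinearMapMonoidHom $he)
  rwa [map_pow, map_one] at h

section Forms

variable {R E ι : Type*} [CommRing R] [AddCommGroup E] [Module R E] [Fintype ι] [DecidableEq ι]
  (b : Basis ι R E)

theorem Matrix.toBilin_apply_basis (G : Matrix ι ι R) (i j : ι) :
    toBilin b G (b i) (b j) = G i j :=
  toLinearMap₂_apply_basis b b G i j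

theorem polarBilin_toQuadraticMap_toBilin (G : Matrix ι ι R) :
    (toBilin b G).toQuadraticMap.polarBilin = toBilin b (G + Gᵀ) := by
  refine BilinForm.ext_basis b fun i j => ?_
  rw [QuadraticMap.polarBilin_apply_apply, BilinMap.polar_toQuadraticMap, toBilin_apply_basis,
    toBilin_apply_basis, toBilin_apply_basis, Matrix.add_apply, transpose_apply]

theorem toQuadraticMap_toBilin_toLin_apply {G A : Matrix ι ι R} (hA : Aᵀ * G * A = G) (x : E) :
    (toBilin b G).toQuadraticMap (toLin b b A x) = (toBilin b G).toQuadraticMap x := by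
  have h := congr($(toBilin_comp b b G A A) x x)
  rwa [hA] at h

end Forms

section Matrices

variable {K : Type*} [CommRing K]

def nilMatrixA : Matrix (Fin 4) (Fin 4) K :=
  !![0, 1, 0, 0; 0, 0, 0, 1; 0, 0, 0, 0; 0, 0, 0, 0]

def nilMatrixB (γ : K) : Matrix (Fin 4) (Fin 4) K :=
  !![0, 0, γ, 0; 0, 0, 0, 0; 0, 0, 0, 1; 0, 0, 0, 0]

def invariantGram (γ : K) : Matrix (Fin 4) (Fin 4) K :=
  !![0, 0, 0, 2; 0, -2, 0, 1; 0, 0, -2 * γ, γ; 2, 1, γ, 0]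

theorem transpose_mul_invariantGram_mul_nilMatrixA (γ : K) :
    (1 + nilMatrixA)ᵀ * invariantGram γ * (1 + nilMatrixA) = invariantGram γ := by
  ext i j
  fin_cases i <;> fin_cases j <;> simp [nilMatrixA, invariantGram, mul_apply,
    Fin.sum_univ_four, one_apply, add_assoc, one_add_one_eq_two]

theorem transpose_mul_invariantGram_mul_nilMatrixB (γ : K) :
    (1 + nilMatrixB γ)ᵀ * invariantGram γ * (1 + nilMatrixB γ) = invariantGram γ := by
  ext i j
  fin_cases i <;> fin_cases j <;> simp [nilMatrixB, invariantGram, mul_apply,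
    Fin.sum_univ_four, one_apply] <;> ring

theorem det_invariantGram_add_transpose (γ : K) :
    (invariantGram γ + (invariantGram γ)ᵀ).det = -2 ^ 8 * γ := by
  simp [invariantGram, det_succ_row_zero, Fin.sum_univ_succ, Fin.succAbove]
  ring

end Matrices

variable {K V W : Type*} [Field K] [AddCommGroup V] [Module K V] [AddCommGroup W] [Module K W]

theorem Submodule.map_eq_bot_of_isNilpotent_of_finrank_eq_one {N : Module.End K V}
    (hN : IsNilpotent N) {U : Submodule K V} (hU : finrank K U = 1) (hNU : U.map N ≤ U) :
    U.map N = ⊥ := by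
  have : FiniteDimensional K U := Module.finite_of_finrank_eq_succ hU
  by_contra hne
  have hself : U.map N = U := by
    refine Submodule.eq_of_le_of_finrank_le hNU ?_
    rw [hU, Nat.one_le_iff_ne_zero, Ne, Submodule.finrank_eq_zero]
    exact hne
  have hpow : ∀ k : ℕ, U.map (N ^ k) = U := by
    intro k
    induction k with
    | zero => rw [pow_zero, Module.End.one_eq_id, Submodule.map_id]
    | succ k ih => rw [pow_succ', Module.End.mul_eq_comp, Submodule.map_comp, ih, hself]
  obtain ⟨n, hn⟩ := hN
  have hbot : U = ⊥ := by rw [← hpow n, hn, Submodule.map_zero]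
  rw [hbot, finrank_bot] at hU
  exact zero_ne_one hU

theorem Submodule.finrank_map_add_finrank_inf_ker (f : V →ₗ[K] W) (U : Submodule K V)
    [FiniteDimensional K U] : finrank K (U.map f) + finrank K ↥(U ⊓ ker f) = finrank K U := by
  rw [← range_domRestrict, ← finrank_range_add_finrank_ker (f.domRestrict U)]
  congr 1
  rw [ker_domRestrict, ← Submodule.finrank_map_subtype_eq, Submodule.map_comap_subtype]

theorem Submodule.finrank_sup_eq_add_one_of_ne [FiniteDimensional K V] {W₁ W₂ : Submodule K V}
    {d : ℕ} (h₁ : finrank K W₁ = d) (h₂ : finrank K W₂ = d) (hne : W₁ ≠ W₂) (htop : W₁ ⊔ W₂ ≠ ⊤)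
    (hV : finrank K V = d + 2) : finrank K ↥(W₁ ⊔ W₂) = d + 1 := by
  have hlt := Submodule.finrank_lt htop
  have hle := Submodule.finrank_mono (le_sup_left : W₁ ≤ W₁ ⊔ W₂)
  suffices finrank K ↥(W₁ ⊔ W₂) ≠ d by omega
  intro h
  have e₁ := Submodule.eq_of_le_of_finrank_le (le_sup_left : W₁ ≤ W₁ ⊔ W₂) (by omega)
  have e₂ := Submodule.eq_of_le_of_finrank_le (le_sup_right : W₂ ≤ W₁ ⊔ W₂) (by omega)
  exact hne (e₁.trans e₂.symm)

variable {N M : Module.End K V}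

theorem linearIndependent_normalForm {v : V} (hNM : ∀ x, N (M x) = 0) (hMN : ∀ x, M (N x) = 0)
    (hN3 : N (N (N v)) = 0) (hN2 : N (N v) ≠ 0) (hM2 : M (M v) ≠ 0) :
    LinearIndependent K ![N (N v), N v, M v, v] := by
  rw [Fintype.linearIndependent_iff]
  intro c hc
  simp only [Fin.sum_univ_four, Fin.isValue, Matrix.cons_val_zero, Matrix.cons_val_one,
    Matrix.cons_val] at hc
  have h3 : c 3 = 0 := by
    have h := congr(N (N $hc))
    simp only [map_add, map_smul, hN3, hNM, map_zero, smul_zero, zero_add] at h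
    exact (smul_eq_zero.mp h).resolve_right hN2
  have h1 : c 1 = 0 := by
    have h := congr(N $hc)
    simp only [map_add, map_smul, hN3, hNM, map_zero, smul_zero, zero_add, h3, zero_smul,
      add_zero] at h
    exact (smul_eq_zero.mp h).resolve_right hN2
  have h2 : c 2 = 0 := by
    have h := congr(M $hc)
    simp only [map_add, map_smul, hMN, map_zero, smul_zero, zero_add, h3, h1, zero_smul,
      add_zero] at h
    exact (smul_eq_zero.mp h).resolve_right hM2
  have h0 : c 0 = 0 := by
    simp only [h1, h2, h3, zero_smul, add_zero] at hc
    exact (smul_eq_zero.mp hc).resolve_right hN2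
  intro i
  fin_cases i <;> assumption

section NormalForm

variable [FiniteDimensional K V]

theorem finrank_map_range_self_eq_one (hMN : range M = ker N) (hrN : finrank K (range N) = 2)
    (hinf : finrank K ↥(range N ⊓ range M) = 1) : finrank K ((range N).map N) = 1 := by
  have := (range N).finrank_map_add_finrank_inf_ker N
  rw [← hMN, hinf, hrN] at this
  omega

theorem apply_apply_apply_eq_zero (hN : IsNilpotent N) (hMN : range M = ker N)
    (hrN : finrank K (range N) = 2) (hinf : finrank K ↥(range N ⊓ range M) = 1) (x : V) :
    N (N (N x)) = 0 := by
  have hbot := Submodule.map_eq_bot_of_isNilpotent_of_finrank_eq_one hN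
    (finrank_map_range_self_eq_one hMN hrN hinf) (Submodule.map_mono map_le_range)
  have : N (N (N x)) ∈ ((range N).map N).map N :=
    Submodule.mem_map_of_mem (Submodule.mem_map_of_mem (mem_range_self N x))
  rwa [hbot, Submodule.mem_bot] at this

theorem apply_apply_ne_zero (hN : IsNilpotent N) (hMN : range M = ker N)
    (hV : finrank K V = 4) (hrN : finrank K (range N) = 2)
    (hinf : finrank K ↥(range N ⊓ range M) = 1) (hsup : finrank K ↥(range N ⊔ range M) = 3)
    {v : V} (hv : v ∉ range N ⊔ range M) : N (N v) ≠ 0 := by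
  have hker : finrank K (ker (N ∘ₗ N)) = 3 := by
    have := finrank_range_add_finrank_ker (N ∘ₗ N)
    rw [range_comp, finrank_map_range_self_eq_one hMN hrN hinf, hV] at this
    omega
  have hle : range N ⊔ range M ≤ ker (N ∘ₗ N) := by
    refine sup_le ?_ (hMN ▸ ker_le_ker_comp N N)
    rintro _ ⟨x, rfl⟩
    exact apply_apply_apply_eq_zero hN hMN hrN hinf x
  have heq := Submodule.eq_of_le_of_finrank_le hle (by rw [hker, hsup])
  intro h
  exact hv (heq ▸ h)

theorem exists_basis_toLin_eq_nilMatrix (hN : IsNilpotent N) (hM : IsNilpotent M)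
    (hNM : range N = ker M) (hMN : range M = ker N) (hV : finrank K V = 4)
    (hrN : finrank K (range N) = 2) (hrM : finrank K (range M) = 2) (hne : range N ≠ range M)
    {v : V} (hv : v ∉ range N ⊔ range M) :
    ∃ γ : K, γ ≠ 0 ∧ ∃ b : Basis (Fin 4) K V,
      Matrix.toLin b b nilMatrixA = N ∧ Matrix.toLin b b (nilMatrixB γ) = M ∧ b 3 = v := by
  have hsup : finrank K ↥(range N ⊔ range M) = 3 :=
    Submodule.finrank_sup_eq_add_one_of_ne hrN hrM hne (fun h => hv (h ▸ Submodule.mem_top)) hV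
  have hinf : finrank K ↥(range N ⊓ range M) = 1 := by
    have := Submodule.finrank_sup_add_finrank_inf_eq (range N) (range M)
    omega
  have hinf' : finrank K ↥(range M ⊓ range N) = 1 := inf_comm (range N) (range M) ▸ hinf
  have hN3 := apply_apply_apply_eq_zero hN hMN hrN hinf
  have hM3 := apply_apply_apply_eq_zero hM hNM hrM hinf'
  have hN2 := apply_apply_ne_zero hN hMN hV hrN hinf hsup hv
  have hM2 := apply_apply_ne_zero hM hNM hV hrM hinf' (sup_comm (range N) _ ▸ hsup)
    (sup_comm (range N) _ ▸ hv)
  have hNM0 (x : V) : N (M x) = 0 := mem_ker.mp (hMN ▸ mem_range_self M x)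
  have hMN0 (x : V) : M (N x) = 0 := mem_ker.mp (hNM ▸ mem_range_self N x)
  obtain ⟨γ, hγ⟩ : ∃ γ : K, γ • N (N v) = M (M v) := by
    obtain ⟨γ, hγ⟩ := exists_smul_eq_of_finrank_eq_one hinf
      (x := ⟨N (N v), mem_range_self _ _, hMN ▸ hN3 v⟩) (fun h => hN2 congr($h.1))
      ⟨M (M v), hNM ▸ hM3 v, mem_range_self _ _⟩
    exact ⟨γ, congr_arg Subtype.val hγ⟩
  have hγ0 : γ ≠ 0 := by
    rintro rfl
    exact hM2 (by rw [← hγ, zero_smul])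
  have hli := linearIndependent_normalForm hNM0 hMN0 (hN3 v) hN2 hM2
  let b := basisOfLinearIndependentOfCardEqFinrank hli (by rw [Fintype.card_fin, hV])
  have hb : ⇑b = ![N (N v), N v, M v, v] := coe_basisOfLinearIndependentOfCardEqFinrank _ _
  refine ⟨γ, hγ0, b, b.ext fun i => ?_, b.ext fun i => ?_, by rw [hb]; rfl⟩
  · rw [Matrix.toLin_self]
    fin_cases i <;> simp [Fin.sum_univ_four, hb, nilMatrixA, hN3, hNM0]
  · rw [Matrix.toLin_self]
    fin_cases i <;> simp [Fin.sum_univ_four, hb, nilMatrixB, hMN0, hγ]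

end NormalForm

theorem stmt17_general (p : ℕ) [hp : Fact (Nat.Prime p)] (hodd : Odd p)
    (a b : (Fin 4 → ZMod p) ≃ₗ[ZMod p] (Fin 4 → ZMod p))
    (hap : a ^ p = 1) (hbp : b ^ p = 1)
    (hVaCb : LinearMap.range (a.toLinearMap - LinearMap.id) =
      LinearMap.ker (b.toLinearMap - LinearMap.id))
    (hVbCa : LinearMap.range (b.toLinearMap - LinearMap.id) =
      LinearMap.ker (a.toLinearMap - LinearMap.id))
    (hne : LinearMap.range (a.toLinearMap - LinearMap.id) ≠
      LinearMap.range (b.toLinearMap - LinearMap.id))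
    (hdima : Module.finrank (ZMod p) ↥(LinearMap.range (a.toLinearMap - LinearMap.id)) = 2)
    (hdimb : Module.finrank (ZMod p) ↥(LinearMap.range (b.toLinearMap - LinearMap.id)) = 2)
    (v : Fin 4 → ZMod p)
    (hv : v ∉ LinearMap.range (a.toLinearMap - LinearMap.id) ⊔
      LinearMap.range (b.toLinearMap - LinearMap.id)) :
    ∃ q : QuadraticForm (ZMod p) (Fin 4 → ZMod p),
      LinearMap.BilinForm.Nondegenerate q.polarBilin ∧
      (∀ w, q (a w) = q w) ∧
      (∀ w, q (b w) = q w) ∧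
      q v = 0 := by
  obtain ⟨γ, hγ, e, heN, heM, hev⟩ := exists_basis_toLin_eq_nilMatrix
    (a.isNilpotent_sub_id_of_pow_eq_one p hap) (b.isNilpotent_sub_id_of_pow_eq_one p hbp)
    hVaCb hVbCa (finrank_fin_fun _) hdima hdimb hne hv
  have h2 : (2 : ZMod p) ≠ 0 := Ring.two_ne_zero (by
    rw [ZMod.ringChar_zmod_n]; rintro rfl; exact Nat.not_odd_iff_even.mpr even_two hodd)
  refine ⟨(toBilin e (invariantGram γ)).toQuadraticMap, ?_, fun w => ?_, fun w => ?_, ?_⟩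
  · rw [polarBilin_toQuadraticMap_toBilin, nondegenerate_toBilin_iff,
      Matrix.nondegenerate_iff_det_ne_zero, det_invariantGram_add_transpose]
    exact mul_ne_zero (neg_ne_zero.mpr (pow_ne_zero 8 h2)) hγ
  · have ha : toLin e e (1 + nilMatrixA) = a.toLinearMap := by
      rw [map_add, toLin_one, heN, add_sub_cancel]
    simpa [ha] using
      toQuadraticMap_toBilin_toLin_apply e (transpose_mul_invariantGram_mul_nilMatrixA γ) w
  · have hb : toLin e e (1 + nilMatrixB γ) = b.toLinearMap := by
      rw [map_add, toLin_one, heM, add_sub_cancel]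
    simpa [hb] using
      toQuadraticMap_toBilin_toLin_apply e (transpose_mul_invariantGram_mul_nilMatrixB γ) w
  · rw [← hev, BilinMap.toQuadraticMap_apply, toBilin_apply_basis]
    rfl

/-- Let `p` be an odd prime, `V = Fin 4 → ZMod p`, and let `a`,
`b` be commuting linear automorphisms of `V` of order dividing `p` generating an
elementary abelian group of order `p²`, with `[V,a] = C_V(b)` and `[V,b] = C_V(a)`
distinct of dimension 2.  If `v ∉ [V,a] + [V,b]`, then there is a quadratic form on
`V` with non-degenerate polar form, invariant under `a` and `b`, for which `v` is
singular. -/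
theorem stmt17 (p : ℕ) [hp : Fact (Nat.Prime p)] (hodd : Odd p)
    (a b : (Fin 4 → ZMod p) ≃ₗ[ZMod p] (Fin 4 → ZMod p))
    (hcomm : a * b = b * a)
    (hap : a ^ p = 1) (hbp : b ^ p = 1)
    (hcard : Nat.card (Subgroup.closure {a, b} :
      Subgroup ((Fin 4 → ZMod p) ≃ₗ[ZMod p] (Fin 4 → ZMod p))) = p ^ 2)
    (hVaCb : LinearMap.range (a.toLinearMap - LinearMap.id) =
      LinearMap.ker (b.toLinearMap - LinearMap.id))
    (hVbCa : LinearMap.range (b.toLinearMap - LinearMap.id) =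
      LinearMap.ker (a.toLinearMap - LinearMap.id))
    (hne : LinearMap.range (a.toLinearMap - LinearMap.id) ≠
      LinearMap.range (b.toLinearMap - LinearMap.id))
    (hdima : Module.finrank (ZMod p) ↥(LinearMap.range (a.toLinearMap - LinearMap.id)) = 2)
    (hdimb : Module.finrank (ZMod p) ↥(LinearMap.range (b.toLinearMap - LinearMap.id)) = 2)
    (v : Fin 4 → ZMod p)
    (hv : v ∉ LinearMap.range (a.toLinearMap - LinearMap.id) ⊔
      LinearMap.range (b.toLinearMap - LinearMap.id)) :
    ∃ q : QuadraticForm (ZMod p) (Fin 4 → ZMod p),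
      LinearMap.BilinForm.Nondegenerate q.polarBilin ∧
      (∀ w, q (a w) = q w) ∧
      (∀ w, q (b w) = q w) ∧
      q v = 0 :=
  stmt17_general p (hp := hp) hodd a b hap hbp hVaCb hVbCa hne hdima hdimb v hv
end
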